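/- Fix M > 0, d ∈ ℝ, h ≥ 0, and let α_min = φ(d, h) = −2d/(h + √(h² + 2M|d|)) (with φ(0,0) = 0) be the global minimizer of P(α) = dα + (h/2)α² + (M/6)|α|³. Let α′ ∈ ℝ have the same sign as α_min (α′·α_min ≥ 0). Then 0 ≤ P(α′) − P(α_min) ≤ (1/2)·(α_min − α′)²·(h + M|α_min| + (M/3)|α_min − α′|). -/

import Mathlib

/-- The one-dimensional cubic-regularized second-order model
`P(α; d, h) = d·α + (h/2)·α² + (M/6)·|α|³`. -/
noncomputable def cubicModel (M d h α : ℝ) : ℝ :=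
  d * α + h / 2 * α ^ 2 + M / 6 * |α| ^ 3

/-- The global minimizer `φ(d, h) = −2d/(h + √(h² + 2M|d|))` of the cubic model
(understood as `0` when `d = 0` and `h = 0`, since in Lean division by zero is zero). -/
noncomputable def cubicMin (M d h : ℝ) : ℝ :=
  -2 * d / (h + Real.sqrt (h ^ 2 + 2 * M * |d|))

/-!
The minimizer `a = φ(d, h)` satisfies the stationarity equation `d + h a + (M/2) a |a| = 0`.
If `α'` lies on the same side of `0` as `a`, the model is a polynomial on the segment between
them, and stationarity turns the difference into the exact Taylor expansion
`P(α') − P(a) = (t²/2)(h + M|a| + (M/3) t)` with `t = |α'| − |a| ≥ −|a|`, from which both bounds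
are immediate. The reflection `α ↦ −α`, `d ↦ −d` reduces the case `a ≤ 0` to `a ≥ 0`.
-/

lemma cubicModel_neg (M d h x : ℝ) : cubicModel M d h (-x) = cubicModel M (-d) h x := by
  unfold cubicModel
  rw [abs_neg]
  ring

lemma cubicMin_stationary {M : ℝ} (hM : 0 < M) (d : ℝ) {h : ℝ} (hh : 0 ≤ h) :
    d + h * cubicMin M d h + M / 2 * cubicMin M d h * |cubicMin M d h| = 0 := by
  rcases eq_or_ne d 0 with rfl | hd
  · simp [cubicMin]
  set s := Real.sqrt (h ^ 2 + 2 * M * |d|)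
  have hpos : 0 < h ^ 2 + 2 * M * |d| := by positivity
  have hs_sq : s ^ 2 = h ^ 2 + 2 * M * |d| := Real.sq_sqrt hpos.le
  have hhs : 0 < h + s := by positivity
  have hmin : cubicMin M d h = -2 * d / (h + s) := rfl
  have habs : |cubicMin M d h| = 2 * |d| / (h + s) := by
    rw [hmin, abs_div, abs_of_pos hhs, abs_mul]
    norm_num
  rw [habs, hmin]
  field_simp
  linear_combination d * hs_sq

section Perturbation

variable {M d h a x : ℝ}

lemma cubicModel_sub_eq_of_stationary (ha : 0 ≤ a) (hx : 0 ≤ x)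
    (hstat : d + h * a + M / 2 * a ^ 2 = 0) :
    cubicModel M d h x - cubicModel M d h a =
      (x - a) ^ 2 / 2 * (h + M * a + M / 3 * (x - a)) := by
  unfold cubicModel
  rw [abs_of_nonneg ha, abs_of_nonneg hx]
  linear_combination (x - a) * hstat

lemma cubicModel_sub_bounds_of_nonneg (hM : 0 ≤ M) (hh : 0 ≤ h) (ha : 0 ≤ a) (hx : 0 ≤ x)
    (hstat : d + h * a + M / 2 * a * |a| = 0) :
    0 ≤ cubicModel M d h x - cubicModel M d h a ∧
    cubicModel M d h x - cubicModel M d h a ≤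
      1 / 2 * (a - x) ^ 2 * (h + M * |a| + M / 3 * |a - x|) := by
  rw [abs_of_nonneg ha] at hstat ⊢
  rw [cubicModel_sub_eq_of_stationary ha hx (by linear_combination hstat), abs_sub_comm]
  constructor
  · have : 0 ≤ h + M * a + M / 3 * (x - a) := by nlinarith
    exact mul_nonneg (by positivity) this
  · calc (x - a) ^ 2 / 2 * (h + M * a + M / 3 * (x - a))
        = 1 / 2 * (x - a) ^ 2 * (h + M * a + M / 3 * (x - a)) := by ring
      _ ≤ 1 / 2 * (x - a) ^ 2 * (h + M * a + M / 3 * |x - a|) := by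
        gcongr; exact le_abs_self _
      _ = 1 / 2 * (a - x) ^ 2 * (h + M * a + M / 3 * |x - a|) := by rw [sub_sq_comm]

lemma cubicModel_sub_bounds_of_stationary (hM : 0 ≤ M) (hh : 0 ≤ h) (hsign : 0 ≤ x * a)
    (hstat : d + h * a + M / 2 * a * |a| = 0) :
    0 ≤ cubicModel M d h x - cubicModel M d h a ∧
    cubicModel M d h x - cubicModel M d h a ≤
      1 / 2 * (a - x) ^ 2 * (h + M * |a| + M / 3 * |a - x|) := by
  rcases mul_nonneg_iff.mp hsign with ⟨hx, ha⟩ | ⟨hx, ha⟩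
  · exact cubicModel_sub_bounds_of_nonneg hM hh ha hx hstat
  · have hstat' : -d + h * -a + M / 2 * -a * |-a| = 0 := by
      rw [abs_neg]; linear_combination -hstat
    have key := cubicModel_sub_bounds_of_nonneg hM hh (neg_nonneg.mpr ha) (neg_nonneg.mpr hx)
      hstat'
    rwa [← cubicModel_neg, ← cubicModel_neg, neg_neg, neg_neg, abs_neg, neg_sub_neg,
      sub_sq_comm x, abs_sub_comm x] at key

end Perturbation

/-- Perturbation of `P` near its minimum: for `M > 0`, `d ∈ ℝ`, `h ≥ 0`, with
`α_min = φ(d, h)` the global minimizer of `P(α) = dα + (h/2)α² + (M/6)|α|³`, and `α′ ∈ ℝ` of the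
same sign as `α_min`, one has
`0 ≤ P(α′) − P(α_min) ≤ (1/2)(α_min − α′)²(h + M|α_min| + (M/3)|α_min − α′|)`. -/
theorem cubicModel_perturbation_near_min (M : ℝ) (hM : 0 < M) (d h : ℝ) (hh : 0 ≤ h)
    (α' : ℝ) (hsign : 0 ≤ α' * cubicMin M d h) :
    0 ≤ cubicModel M d h α' - cubicModel M d h (cubicMin M d h) ∧
    cubicModel M d h α' - cubicModel M d h (cubicMin M d h) ≤
      1 / 2 * (cubicMin M d h - α') ^ 2 *
        (h + M * |cubicMin M d h| + M / 3 * |cubicMin M d h - α'|) :=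
  cubicModel_sub_bounds_of_stationary hM.le hh hsign (cubicMin_stationary hM d hh)
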